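/- Let 𝓛 be a nonempty convex subset of a Coxeter group W, let Str(R) be a stratum, and let β be a transmitting root of Str(R). Then for every u ∈ Str(R), the root −uβ is a small root of W (a positive root that does not dominate any other positive root). -/

import Mathlib

open scoped Classical

noncomputable section

namespace BKBilliards

variable {I : Type*} [Fintype I] [DecidableEq I]
variable {M : CoxeterMatrix I} {W : Type*} [Group W]

/-- The simple root indexed by `i`, i.e. the `i`-th standard basis vector of `ℝ^I`. -/
def sroot (i : I) : I → ℝ := Pi.single i 1

/-- The data `(ρ, B)` constitutes the standard geometric representation of the Coxeter
system `cs`, together with its induced symmetric bilinear form (with `μ = 1` on all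
pairs whose Coxeter matrix entry is `∞`, encoded as `0`). -/
structure IsGeometric (cs : CoxeterSystem M W) (ρ : Representation ℝ W (I → ℝ))
    (B : LinearMap.BilinForm ℝ (I → ℝ)) : Prop where
  /-- `B(αᵢ, αᵢ') = -cos (π / m i i')` when `m i i' ≠ ∞`. -/
  form_apply_of_ne_zero : ∀ i i' : I, M i i' ≠ 0 →
    B (sroot i) (sroot i') = - Real.cos (Real.pi / (M i i' : ℝ))
  /-- `B(αᵢ, αᵢ') = -1` when `m i i' = ∞` (encoded as `0`). -/
  form_apply_of_eq_zero : ∀ i i' : I, M i i' = 0 → B (sroot i) (sroot i') = -1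
  /-- Each simple reflection acts by the reflection formula. -/
  simple_apply : ∀ (i : I) (v : I → ℝ), ρ (cs.simple i) v = v - (2 * B v (sroot i)) • sroot i

variable (ρ : Representation ℝ W (I → ℝ))

/-- The root system `Φ = {w αᵢ : w ∈ W, i ∈ I}`. -/
def Phi : Set (I → ℝ) := {v | ∃ (w : W) (i : I), v = ρ w (sroot i)}

/-- The half-space `H_β⁺ = {w ∈ W : w β ∈ Φ⁺}`: for a root `β`, membership amounts to
`w β` being a nonnegative combination of the simple roots. -/
def Hplus (β : I → ℝ) : Set W := {w : W | 0 ≤ ρ w β}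

/-- `R(𝓛) = {β ∈ Φ : 𝓛 ⊆ H_β⁺}`. -/
def RL (L : Set W) : Set (I → ℝ) := {β | β ∈ Phi ρ ∧ ∀ w ∈ L, w ∈ Hplus ρ β}

/-- `𝓛` is convex if it equals the intersection of all half-spaces containing it. -/
def IsConvex (L : Set W) : Prop := ∀ u : W, (∀ β ∈ RL ρ L, u ∈ Hplus ρ β) → u ∈ L

/-- The set of separators of `u`: `Sep(u) = {β ∈ R(𝓛) : u β ∈ Φ⁻}`. -/
def Sep (L : Set W) (u : W) : Set (I → ℝ) := {β | β ∈ RL ρ L ∧ ρ u β ≤ 0}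

variable (cs : CoxeterSystem M W)

/-- The noninvertible Bender–Knuth toggle `τᵢ` associated to the convex set `𝓛`. -/
def toggle (L : Set W) (i : I) (u : W) : W :=
  if ρ u⁻¹ (sroot i) ∈ RL ρ L then u else cs.simple i * u

/-- For a word `𝗐 = i_M ⋯ i_1` (a list whose head is `i_M`), the composition
`τ_𝗐 = τ_{i_M} ⋯ τ_{i_1}`. -/
def toggleWord (L : Set W) (l : List I) (u : W) : W :=
  l.foldr (fun i v => toggle ρ cs L i v) u

/-- `β` dominates `β'` if `H_β⁺ ⊇ H_{β'}⁺`. -/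
def Dominates (β β' : I → ℝ) : Prop := Hplus ρ β' ⊆ Hplus ρ β

/-- A small root: a positive root dominating no positive root other than itself. -/
def IsSmall (β : I → ℝ) : Prop :=
  β ∈ Phi ρ ∧ 0 ≤ β ∧ ∀ β', β' ∈ Phi ρ → 0 ≤ β' → Dominates ρ β β' → β' = β

/-- `β` is a transmitting root of the stratum `Str(R)`:
`β ∈ R(𝓛)` and `β = -w⁻¹ αᵢ` for some `w` with `Sep(w) = R` and some `i ∈ I`. -/
def IsTransmitting (L : Set W) (R : Set (I → ℝ)) (β : I → ℝ) : Prop :=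
  β ∈ RL ρ L ∧ ∃ (w : W) (i : I), Sep ρ L w = R ∧ β = - ρ w⁻¹ (sroot i)

end BKBilliards

open BKBilliards

namespace BKAux
set_option linter.unusedSectionVars false

open BKBilliards CoxeterSystem

variable {I : Type*} [Fintype I] [DecidableEq I]
variable {M : CoxeterMatrix I} {W : Type*} [Group W]
variable {cs : CoxeterSystem M W} {ρ : Representation ℝ W (I → ℝ)}
variable {B : LinearMap.BilinForm ℝ (I → ℝ)}

lemma rho_mul (x y : W) (v : I → ℝ) : ρ (x * y) v = ρ x (ρ y v) := by
  rw [map_mul]; rfl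

lemma rho_one (v : I → ℝ) : ρ (1 : W) v = v := by rw [map_one]; rfl

lemma rho_inv_cancel (x : W) (v : I → ℝ) : ρ x⁻¹ (ρ x v) = v := by
  rw [← rho_mul, inv_mul_cancel, rho_one]

lemma sroot_nonneg (j : I) : (0 : I → ℝ) ≤ sroot j := by
  refine Pi.le_def.mpr fun l => ?_
  by_cases h : l = j <;> simp [sroot, Pi.single_apply, h]

lemma sroot_apply_self (j : I) : sroot j j = 1 := by simp [sroot]

lemma sroot_apply_ne {j l : I} (h : l ≠ j) : sroot j l = 0 := by
  simp [sroot, Pi.single_apply, h]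

lemma root_ne_zero (v : W) (j : I) : ρ v (sroot j) ≠ 0 := by
  intro h
  have h2 : ρ v⁻¹ (ρ v (sroot j)) = ρ v⁻¹ 0 := by rw [h]
  rw [rho_inv_cancel, map_zero] at h2
  have := congrFun h2 j
  rw [sroot_apply_self] at this
  simp at this

variable (hg : IsGeometric cs ρ B)
include hg

lemma Bjj (j : I) : B (sroot j) (sroot j) = 1 := by
  have h := hg.form_apply_of_ne_zero j j (by simp)
  rw [M.diagonal] at h
  simp [Real.cos_pi] at h
  exact h

lemma Bbasis_symm (l r : I) : B (sroot l) (sroot r) = B (sroot r) (sroot l) := by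
  rcases eq_or_ne (M l r) 0 with h0 | h0
  · rw [hg.form_apply_of_eq_zero l r h0, hg.form_apply_of_eq_zero r l (by rw [← M.symmetric]; exact h0)]
  · rw [hg.form_apply_of_ne_zero l r h0, hg.form_apply_of_ne_zero r l (by rw [← M.symmetric]; exact h0),
      M.symmetric l r]

omit hg

lemma pi_expand (z : I → ℝ) : z = ∑ l : I, z l • sroot l := by
  funext m
  rw [Finset.sum_apply]
  simp [sroot, Pi.single_apply]

lemma B_expand (x y : I → ℝ) :
    B x y = ∑ l : I, ∑ r : I, x l * (y r * B (sroot l) (sroot r)) := by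
  conv_lhs => rw [pi_expand x, pi_expand y]
  simp only [map_sum, map_smul, LinearMap.coe_sum, Finset.sum_apply, LinearMap.smul_apply,
    smul_eq_mul, Finset.mul_sum]
  rw [Finset.sum_comm]
  exact Finset.sum_congr rfl fun l _ => Finset.sum_congr rfl fun r _ => by ring

include hg

lemma Bsym (x y : I → ℝ) : B x y = B y x := by
  rw [B_expand x y, B_expand y x, Finset.sum_comm]
  refine Finset.sum_congr rfl fun r _ => Finset.sum_congr rfl fun l _ => ?_
  rw [Bbasis_symm hg l r]
  ring

lemma Binv_simple (i : I) (x y : I → ℝ) :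
    B (ρ (cs.simple i) x) (ρ (cs.simple i) y) = B x y := by
  rw [hg.simple_apply, hg.simple_apply]
  simp only [map_sub, map_smul, LinearMap.sub_apply, LinearMap.smul_apply, smul_eq_mul]
  rw [Bjj hg, Bsym hg (sroot i) y]
  ring

lemma Binv (v : W) (x y : I → ℝ) : B (ρ v x) (ρ v y) = B x y := by
  induction v using cs.simple_induction generalizing x y with
  | simple i => exact Binv_simple hg i x y
  | one => rw [rho_one, rho_one]
  | mul w w' hw hw' => rw [rho_mul, rho_mul, hw, hw']

lemma root_norm (v : W) (j : I) : B (ρ v (sroot j)) (ρ v (sroot j)) = 1 := by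
  rw [Binv hg, Bjj hg]

lemma rho_simple_self (i : I) : ρ (cs.simple i) (sroot i) = - sroot i := by
  rw [hg.simple_apply, Bjj hg, mul_one, two_smul]
  abel


omit hg

/-! ### Rank-2 (dihedral) computations -/

def coP (b : ℝ) : ℕ → ℝ × ℝ
  | 0 => (1, 0)
  | p+1 => if Even p then ((coP b p).1, -(coP b p).2 - 2*b*(coP b p).1)
           else (-(coP b p).1 - 2*b*(coP b p).2, (coP b p).2)

lemma coP_zero (b : ℝ) : coP b 0 = (1, 0) := rfl

lemma coP_succ (b : ℝ) (p : ℕ) :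
    coP b (p+1) = if Even p then ((coP b p).1, -(coP b p).2 - 2*b*(coP b p).1)
           else (-(coP b p).1 - 2*b*(coP b p).2, (coP b p).2) := rfl

include hg

lemma act_simple (x y : I) (hxy : x ≠ y) (A C : ℝ) :
    ρ (cs.simple x) (A • sroot x + C • sroot y)
      = (-A - 2 * B (sroot x) (sroot y) * C) • sroot x + C • sroot y := by
  rw [hg.simple_apply]
  have h1 : B (A • sroot x + C • sroot y) (sroot x) = A + C * B (sroot x) (sroot y) := by
    simp only [map_add, LinearMap.add_apply, map_smul, LinearMap.smul_apply, smul_eq_mul]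
    rw [Bjj hg, Bbasis_symm hg y x]
    ring
  rw [h1]
  match_scalars <;> ring

lemma act_other (x y : I) (hxy : x ≠ y) (A C : ℝ) :
    ρ (cs.simple y) (A • sroot x + C • sroot y)
      = A • sroot x + (-C - 2 * B (sroot x) (sroot y) * A) • sroot y := by
  rw [hg.simple_apply]
  have h1 : B (A • sroot x + C • sroot y) (sroot y) = A * B (sroot x) (sroot y) + C := by
    simp only [map_add, LinearMap.add_apply, map_smul, LinearMap.smul_apply, smul_eq_mul]
    rw [Bjj hg]
    ring
  rw [h1]
  match_scalars <;> ring

lemma alt_image (j k : I) (hjk : j ≠ k) (p : ℕ) :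
    ρ (cs.wordProd (CoxeterSystem.alternatingWord j k p)) (sroot j)
      = (coP (B (sroot j) (sroot k)) p).1 • sroot j
          + (coP (B (sroot j) (sroot k)) p).2 • sroot k := by
  induction p with
  | zero =>
    rw [show CoxeterSystem.alternatingWord j k 0 = [] from rfl, cs.wordProd_nil, rho_one, coP_zero]
    match_scalars <;> ring
  | succ p ih =>
    rw [CoxeterSystem.alternatingWord_succ', cs.wordProd_cons, rho_mul, ih, coP_succ]
    rcases Nat.even_or_odd p with hE | hO
    · simp only [if_pos hE]
      exact act_other hg j k hjk _ _
    · simp only [if_neg (Nat.not_even_iff_odd.mpr hO)]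
      exact act_simple hg j k hjk _ _

omit hg

lemma coP_neg_one (p : ℕ) :
    coP (-1) p = if Even p then ((p:ℝ)+1, (p:ℝ)) else ((p:ℝ), (p:ℝ)+1) := by
  induction p with
  | zero => simp [coP_zero]
  | succ p ih =>
    rcases Nat.even_or_odd p with hE | hO
    · have hodd : ¬ Even (p+1) := by simp [Nat.even_add_one, hE]
      rw [coP_succ, ih, if_pos hE, if_pos hE, if_neg hodd]
      rw [Prod.ext_iff]
      constructor <;> · dsimp only; push_cast; ring
    · have hne : ¬ Even p := Nat.not_even_iff_odd.mpr hO
      have hev : Even (p+1) := by simp [Nat.even_add_one, hne]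
      rw [coP_succ, ih, if_neg hne, if_neg hne, if_pos hev]
      rw [Prod.ext_iff]
      constructor <;> · dsimp only; push_cast; ring

lemma coP_trig (m : ℕ) (hm : 2 ≤ m) (p : ℕ) :
    Real.sin (Real.pi / m) * (coP (-Real.cos (Real.pi / m)) p).1
      = (if Even p then Real.sin (((p:ℝ)+1) * (Real.pi / m))
          else Real.sin ((p:ℝ) * (Real.pi / m)))
    ∧ Real.sin (Real.pi / m) * (coP (-Real.cos (Real.pi / m)) p).2
      = (if Even p then Real.sin ((p:ℝ) * (Real.pi / m))
          else Real.sin (((p:ℝ)+1) * (Real.pi / m))) := by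
  set θ := Real.pi / m with hθ
  have key : ∀ x : ℝ, Real.sin (x + θ) = 2 * Real.sin x * Real.cos θ - Real.sin (x - θ) := by
    intro x; rw [Real.sin_add, Real.sin_sub]; ring
  induction p with
  | zero => constructor <;> simp [coP_zero]
  | succ p ih =>
    obtain ⟨ih1, ih2⟩ := ih
    rcases Nat.even_or_odd p with hE | hO
    · have hodd : ¬ Even (p+1) := by simp [Nat.even_add_one, hE]
      rw [if_pos hE] at ih1 ih2
      rw [coP_succ, if_pos hE, if_neg hodd, if_neg hodd]
      dsimp only
      constructor
      · push_cast
        exact ih1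
      · push_cast
        have e1 : ((p:ℝ)+1+1) * θ = (((p:ℝ)+1)*θ) + θ := by ring
        rw [e1, key]
        have e2 : ((p:ℝ)+1)*θ - θ = (p:ℝ) * θ := by ring
        rw [e2]
        linear_combination 2 * Real.cos θ * ih1 - ih2
    · have hne : ¬ Even p := Nat.not_even_iff_odd.mpr hO
      have hev : Even (p+1) := by simp [Nat.even_add_one, hne]
      rw [if_neg hne] at ih1 ih2
      rw [coP_succ, if_neg hne, if_pos hev, if_pos hev]
      dsimp only
      constructor
      · push_cast
        have e1 : ((p:ℝ)+1+1) * θ = (((p:ℝ)+1)*θ) + θ := by ring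
        rw [e1, key]
        have e2 : ((p:ℝ)+1)*θ - θ = (p:ℝ) * θ := by ring
        rw [e2]
        linear_combination 2 * Real.cos θ * ih2 - ih1
      · push_cast
        exact ih2

include hg

lemma coP_nonneg (j k : I) (hjk : j ≠ k) (p : ℕ) (hp : M j k = 0 ∨ p + 1 ≤ M j k) :
    0 ≤ (coP (B (sroot j) (sroot k)) p).1 ∧ 0 ≤ (coP (B (sroot j) (sroot k)) p).2 := by
  rcases hp with h0 | hpm
  · rw [hg.form_apply_of_eq_zero j k h0, coP_neg_one]
    rcases Nat.even_or_odd p with hE | hO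
    · rw [if_pos hE]
      constructor <;> · dsimp only; positivity
    · rw [if_neg (Nat.not_even_iff_odd.mpr hO)]
      constructor <;> · dsimp only; positivity
  · have hm2 : 2 ≤ M j k := by
      have h1 := M.off_diagonal j k hjk
      omega
    rw [hg.form_apply_of_ne_zero j k (by omega)]
    obtain ⟨h1, h2⟩ := coP_trig (M j k) hm2 p
    set θ := Real.pi / (M j k : ℝ) with hθ
    have hMpos : (0:ℝ) < (M j k : ℝ) := by exact_mod_cast (by omega : 0 < M j k)
    have hθpos : 0 < θ := div_pos Real.pi_pos hMpos
    have hθlt : θ < Real.pi := by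
      rw [hθ]
      exact div_lt_self Real.pi_pos (by exact_mod_cast (by omega : 1 < M j k))
    have hsin : 0 < Real.sin θ := Real.sin_pos_of_pos_of_lt_pi hθpos hθlt
    have hub : ((p:ℝ)+1) * θ ≤ Real.pi := by
      have hc : ((p:ℝ)+1) ≤ (M j k : ℝ) := by exact_mod_cast hpm
      calc ((p:ℝ)+1)*θ ≤ (M j k:ℝ) * θ := mul_le_mul_of_nonneg_right hc hθpos.le
        _ = Real.pi := by rw [hθ]; field_simp
    have hs1 : 0 ≤ Real.sin ((p:ℝ)*θ) := by
      apply Real.sin_nonneg_of_nonneg_of_le_pi (by positivity)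
      nlinarith [hθpos.le]
    have hs2 : 0 ≤ Real.sin (((p:ℝ)+1)*θ) := Real.sin_nonneg_of_nonneg_of_le_pi (by positivity) hub
    rcases Nat.even_or_odd p with hE | hO
    · rw [if_pos hE] at h1 h2
      constructor
      · nlinarith [h1, hsin, hs2]
      · nlinarith [h2, hsin, hs1]
    · rw [if_neg (Nat.not_even_iff_odd.mpr hO)] at h1 h2
      constructor
      · nlinarith [h1, hsin, hs1]
      · nlinarith [h2, hsin, hs2]


omit hg

/-! ### Reduced words in two letters -/

lemma cons_alt (x y : I) (c : I) (ω' : List I) (hc : c = x ∨ c = y)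
    (h : ω' = CoxeterSystem.alternatingWord x y ω'.length) (hne : ω' ≠ [])
    (hred : cs.IsReduced (c :: ω')) :
    c :: ω' = CoxeterSystem.alternatingWord x y (ω'.length + 1) := by
  obtain ⟨q', hq⟩ : ∃ q', ω'.length = q' + 1 := by
    cases hlen : ω'.length with
    | zero => exact absurd (List.length_eq_zero_iff.mp hlen) hne
    | succ n => exact ⟨n, rfl⟩
  rw [hq] at h
  have hω'head : ω' = (if Even q' then y else x) :: CoxeterSystem.alternatingWord x y q' := by
    rw [h, CoxeterSystem.alternatingWord_succ']
  have hcne : c ≠ (if Even q' then y else x) := by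
    intro hceq
    have hpi : cs.wordProd (c :: ω') = cs.wordProd (CoxeterSystem.alternatingWord x y q') := by
      conv_lhs => rw [hω'head]
      rw [cs.wordProd_cons, cs.wordProd_cons, hceq, cs.simple_mul_simple_cancel_left]
    have hlen1 := cs.length_wordProd_le (CoxeterSystem.alternatingWord x y q')
    rw [CoxeterSystem.length_alternatingWord] at hlen1
    have hred2 : cs.length (cs.wordProd (c :: ω')) = (c :: ω').length := hred
    rw [hpi] at hred2
    simp only [List.length_cons, hq] at hred2
    omega
  have hc2 : c = (if Even (q'+1) then y else x) := by
    rcases hc with rfl | rfl <;> by_cases hE : Even q' <;>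
      simp [hE, Nat.even_add_one] at hcne ⊢ <;> tauto
  rw [hq, CoxeterSystem.alternatingWord_succ' x y (q'+1), ← hc2, ← h]

lemma alt_classify (j k : I) (ω : List I) (hlet : ∀ c ∈ ω, c = j ∨ c = k)
    (hred : cs.IsReduced ω) :
    ω = CoxeterSystem.alternatingWord j k ω.length
      ∨ ω = CoxeterSystem.alternatingWord k j ω.length := by
  induction ω with
  | nil => left; rfl
  | cons c ω' ihω =>
    have hred' : cs.IsReduced ω' := by
      have := CoxeterSystem.IsReduced.drop (cs := cs) (ω := c :: ω') hred (j := 1)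
      simpa using this
    have hlet' : ∀ d ∈ ω', d = j ∨ d = k := fun d hd => hlet d (List.mem_cons_of_mem _ hd)
    rcases eq_or_ne ω' [] with rfl | hne
    · rcases hlet c (by simp) with rfl | rfl
      · right; rfl
      · left; rfl
    · rcases ihω hlet' hred' with h | h
      · left
        exact cons_alt (cs := cs) j k c ω' (hlet c (by simp)) h hne hred
      · right
        exact cons_alt (cs := cs) k j c ω' ((hlet c (by simp)).symm) h hne hred

/-! ### Stripping right descents in `{j, k}` -/

lemma strip (j k : I) :
    ∀ (n : ℕ) (v : W), cs.length v ≤ n →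
      ∃ (v' : W) (ω : List I), v = v' * cs.wordProd ω ∧ (∀ c ∈ ω, c = j ∨ c = k) ∧
        cs.length v = cs.length v' + ω.length ∧
        ¬cs.IsRightDescent v' j ∧ ¬cs.IsRightDescent v' k := by
  intro n
  induction n with
  | zero =>
    intro v hv
    have hv1 : v = 1 := cs.length_eq_zero_iff.mp (Nat.le_zero.mp hv)
    subst hv1
    exact ⟨1, [], by simp, by simp, by simp, cs.not_isRightDescent_one j,
      cs.not_isRightDescent_one k⟩
  | succ n ih =>
    intro v hv
    by_cases hdj : cs.IsRightDescent v j
    · have h1 : cs.length (v * cs.simple j) + 1 = cs.length v := cs.isRightDescent_iff.mp hdj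
      obtain ⟨v', ω, heq, hlet, hlen, hj', hk'⟩ := ih (v * cs.simple j) (by omega)
      refine ⟨v', ω ++ [j], ?_, ?_, ?_, hj', hk'⟩
      · rw [cs.wordProd_append, cs.wordProd_singleton, ← mul_assoc, ← heq,
          cs.simple_mul_simple_cancel_right]
      · intro c hc
        rcases List.mem_append.mp hc with h | h
        · exact hlet c h
        · left; simpa using h
      · simp only [List.length_append, List.length_singleton]
        omega
    · by_cases hdk : cs.IsRightDescent v k
      · have h1 : cs.length (v * cs.simple k) + 1 = cs.length v := cs.isRightDescent_iff.mp hdk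
        obtain ⟨v', ω, heq, hlet, hlen, hj', hk'⟩ := ih (v * cs.simple k) (by omega)
        refine ⟨v', ω ++ [k], ?_, ?_, ?_, hj', hk'⟩
        · rw [cs.wordProd_append, cs.wordProd_singleton, ← mul_assoc, ← heq,
            cs.simple_mul_simple_cancel_right]
        · intro c hc
          rcases List.mem_append.mp hc with h | h
          · exact hlet c h
          · right; simpa using h
        · simp only [List.length_append, List.length_singleton]
          omega
      · exact ⟨v, [], by simp, by simp, by simp, hdj, hdk⟩

/-! ### The fundamental positivity theorem -/

include hg

lemma ascent_nonneg : ∀ (n : ℕ) (v : W) (j : I), cs.length v ≤ n →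
    ¬cs.IsRightDescent v j → 0 ≤ ρ v (sroot j) := by
  intro n
  induction n with
  | zero =>
    intro v j hv _
    have hv1 : v = 1 := cs.length_eq_zero_iff.mp (Nat.le_zero.mp hv)
    subst hv1
    rw [rho_one]
    exact sroot_nonneg j
  | succ n ih =>
    intro v j hv hasc
    rcases eq_or_ne v 1 with rfl | hv1
    · rw [rho_one]; exact sroot_nonneg j
    obtain ⟨k, hdk⟩ := cs.exists_rightDescent_of_ne_one hv1
    have hjk : j ≠ k := by rintro rfl; exact hasc hdk
    obtain ⟨v', ω, hveq, hlet, hlen, hdj', hdk'⟩ := strip (cs := cs) j k (cs.length v) v le_rfl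
    have hωne : ω ≠ [] := by
      rintro rfl
      rw [cs.wordProd_nil, mul_one] at hveq
      exact hdk' (hveq ▸ hdk)
    have hωpos : 0 < ω.length := List.length_pos_iff.mpr hωne
    have hred : cs.IsReduced ω := by
      have h1 := cs.length_mul_le v' (cs.wordProd ω)
      rw [← hveq] at h1
      have h2 := cs.length_wordProd_le ω
      unfold CoxeterSystem.IsReduced
      omega
    have hasc2 : ω.length < cs.length (cs.wordProd ω * cs.simple j) := by
      have h3 : cs.length (v * cs.simple j) = cs.length v + 1 := cs.not_isRightDescent_iff.mp hasc
      have h4 : cs.length (v * cs.simple j)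
          ≤ cs.length v' + cs.length (cs.wordProd ω * cs.simple j) := by
        rw [hveq, mul_assoc]
        exact cs.length_mul_le _ _
      omega
    have hωjk : ω = CoxeterSystem.alternatingWord j k ω.length := by
      rcases alt_classify (cs := cs) j k ω hlet hred with h | h
      · exact h
      · exfalso
        obtain ⟨q', hq⟩ : ∃ q', ω.length = q' + 1 := ⟨ω.length - 1, by omega⟩
        have h6 : cs.wordProd ω * cs.simple j
            = cs.wordProd (CoxeterSystem.alternatingWord j k q') := by
          conv_lhs => rw [h, hq]
          rw [CoxeterSystem.alternatingWord_succ, cs.wordProd_concat,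
            cs.simple_mul_simple_cancel_right]
        have h5 := cs.length_wordProd_le (CoxeterSystem.alternatingWord j k q')
        rw [CoxeterSystem.length_alternatingWord] at h5
        rw [h6] at hasc2
        omega
    have hpm : M j k = 0 ∨ ω.length + 1 ≤ M j k := by
      rcases eq_or_ne (M j k) 0 with h0 | h0
      · exact Or.inl h0
      · right
        have hple : ω.length ≤ M j k := by
          by_contra hgt
          exact cs.not_isReduced_alternatingWord j k h0 (by omega) (hωjk ▸ hred)
        rcases eq_or_lt_of_le hple with heq2 | hlt
        · exfalso
          have hbr := cs.wordProd_braidWord_eq j k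
          rw [show CoxeterSystem.braidWord M j k
                = CoxeterSystem.alternatingWord j k (M j k) from rfl,
            show CoxeterSystem.braidWord M k j
                = CoxeterSystem.alternatingWord k j (M k j) from rfl,
            M.symmetric k j] at hbr
          obtain ⟨q', hq⟩ : ∃ q', M j k = q' + 1 := ⟨M j k - 1, by omega⟩
          have h6 : cs.wordProd ω * cs.simple j
              = cs.wordProd (CoxeterSystem.alternatingWord j k q') := by
            conv_lhs => rw [hωjk, heq2, hbr, hq]
            rw [CoxeterSystem.alternatingWord_succ, cs.wordProd_concat,
              cs.simple_mul_simple_cancel_right]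
          have h5 := cs.length_wordProd_le (CoxeterSystem.alternatingWord j k q')
          rw [CoxeterSystem.length_alternatingWord] at h5
          rw [h6] at hasc2
          omega
        · omega
    have hcoP := coP_nonneg hg j k hjk ω.length hpm
    have himg := alt_image hg j k hjk ω.length
    rw [← hωjk] at himg
    rw [hveq, rho_mul, himg, map_add, map_smul, map_smul]
    have hjih := ih v' j (by omega) hdj'
    have hkih := ih v' k (by omega) hdk'
    exact add_nonneg (smul_nonneg hcoP.1 hjih) (smul_nonneg hcoP.2 hkih)

lemma root_dichotomy (v : W) (j : I) : 0 ≤ ρ v (sroot j) ∨ ρ v (sroot j) ≤ 0 := by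
  by_cases h : cs.IsRightDescent v j
  · right
    have h2 : ¬cs.IsRightDescent (v * cs.simple j) j :=
      cs.isRightDescent_iff_not_isRightDescent_mul.mp h
    have h3 := ascent_nonneg hg (cs.length (v * cs.simple j)) (v * cs.simple j) j le_rfl h2
    have heq : ρ v (sroot j) = - ρ (v * cs.simple j) (sroot j) := by
      conv_lhs => rw [← cs.simple_mul_simple_cancel_right (w := v) j]
      rw [rho_mul, rho_simple_self hg, map_neg]
    rw [heq]
    exact neg_nonpos.mpr h3
  · left
    exact ascent_nonneg hg (cs.length v) v j le_rfl h


/-! ### Root system facts -/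

omit hg

lemma rho_cancel_inv (x : W) (v : I → ℝ) : ρ x (ρ x⁻¹ v) = v := by
  rw [← rho_mul, mul_inv_cancel, rho_one]

lemma phi_action (v : W) {η : I → ℝ} (h : η ∈ Phi ρ) : ρ v η ∈ Phi ρ := by
  obtain ⟨z, l, rfl⟩ := h
  exact ⟨v * z, l, (rho_mul v z _).symm⟩

include hg

lemma phi_neg {η : I → ℝ} (h : η ∈ Phi ρ) : -η ∈ Phi ρ := by
  obtain ⟨z, l, rfl⟩ := h
  exact ⟨z * cs.simple l, l, by rw [rho_mul, rho_simple_self hg, map_neg]⟩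

omit hg

lemma phi_ne_zero {η : I → ℝ} (h : η ∈ Phi ρ) : η ≠ 0 := by
  obtain ⟨z, l, rfl⟩ := h
  exact root_ne_zero z l

include hg

lemma phi_dichotomy {η : I → ℝ} (h : η ∈ Phi ρ) : 0 ≤ η ∨ η ≤ 0 := by
  obtain ⟨z, l, rfl⟩ := h
  exact root_dichotomy hg z l

lemma phi_norm {η : I → ℝ} (h : η ∈ Phi ρ) : B η η = 1 := by
  obtain ⟨z, l, rfl⟩ := h
  exact root_norm hg z l

/-- A simple root is small: it dominates no positive root other than itself. -/
lemma simple_small (i : I) {ε : I → ℝ} (hPhi : ε ∈ Phi ρ) (hpos : 0 ≤ ε)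
    (hdom : Hplus ρ ε ⊆ Hplus ρ (sroot i)) : ε = sroot i := by
  by_cases hsupp : ∀ l, l ≠ i → ε l = 0
  · have hεi : ε = ε i • sroot i := by
      funext l
      by_cases hl : l = i
      · subst hl; rw [Pi.smul_apply, sroot_apply_self, smul_eq_mul, mul_one]
      · rw [Pi.smul_apply, sroot_apply_ne hl, smul_eq_mul, mul_zero, hsupp l hl]
    have h1 : B ε ε = 1 := phi_norm hg hPhi
    rw [hεi] at h1
    simp only [map_smul, LinearMap.smul_apply, smul_eq_mul] at h1
    rw [Bjj hg] at h1
    have h3 : 0 ≤ ε i := (Pi.le_def.mp hpos) i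
    have h4 : (ε i - 1) * (ε i + 1) = 0 := by linear_combination h1
    rcases mul_eq_zero.mp h4 with h5 | h5
    · have h6 : ε i = 1 := by linarith
      rw [hεi, h6, one_smul]
    · exfalso; linarith
  · exfalso
    push_neg at hsupp
    obtain ⟨l, hl, hlne⟩ := hsupp
    have hlpos : 0 < ε l := lt_of_le_of_ne ((Pi.le_def.mp hpos) l) (Ne.symm hlne)
    have hcoord : (ρ (cs.simple i) ε) l = ε l := by
      rw [hg.simple_apply]
      rw [Pi.sub_apply, Pi.smul_apply, sroot_apply_ne hl, smul_eq_mul, mul_zero, sub_zero]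
    have hroot : ρ (cs.simple i) ε ∈ Phi ρ := phi_action (cs.simple i) hPhi
    have hnn : 0 ≤ ρ (cs.simple i) ε := by
      rcases phi_dichotomy hg hroot with h | h
      · exact h
      · exfalso
        have h9 := (Pi.le_def.mp h) l
        rw [hcoord, Pi.zero_apply] at h9
        linarith
    have hmem : cs.simple i ∈ Hplus ρ ε := hnn
    have h5 : (0:I→ℝ) ≤ ρ (cs.simple i) (sroot i) := hdom hmem
    rw [rho_simple_self hg] at h5
    have h6 := (Pi.le_def.mp h5) i
    rw [Pi.neg_apply, sroot_apply_self, Pi.zero_apply] at h6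
    linarith

end BKAux

open BKAux


/-- If `β` is a transmitting root of a stratum `Str(R)`, then for every
`u ∈ Str(R)`, the root `-uβ` is small. -/
theorem transmitting_root_small
    {I : Type*} [Fintype I] [DecidableEq I] {M : CoxeterMatrix I} {W : Type*} [Group W]
    (cs : CoxeterSystem M W) (ρ : Representation ℝ W (I → ℝ))
    (B : LinearMap.BilinForm ℝ (I → ℝ)) (hgeom : IsGeometric cs ρ B)
    (L : Set W) (hL : L.Nonempty) (hconv : IsConvex ρ L)
    (R : Set (I → ℝ)) (β : I → ℝ) (hβ : IsTransmitting ρ L R β)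
    (u : W) (hu : Sep ρ L u = R) :
    IsSmall ρ (- ρ u β) := by
  classical
  obtain ⟨hβRL, w, i, hSepw, hβeq⟩ := hβ
  have hwβ : ρ w β = - sroot i := by
    rw [hβeq, map_neg, rho_cancel_inv]
  have hβSepw : β ∈ Sep ρ L w := ⟨hβRL, by rw [hwβ]; exact neg_nonpos.mpr (sroot_nonneg i)⟩
  have hSS : Sep ρ L u = Sep ρ L w := hu.trans hSepw.symm
  have hβSepu : β ∈ Sep ρ L u := by rw [hSS]; exact hβSepw
  have huβ : ρ u β ≤ 0 := hβSepu.2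
  have hβPhi' : - ρ u β = ρ (u * w⁻¹) (sroot i) := by
    calc - ρ u β = ρ u (-β) := (map_neg _ _).symm
      _ = ρ u (ρ w⁻¹ (sroot i)) := by rw [hβeq, neg_neg]
      _ = ρ (u * w⁻¹) (sroot i) := (rho_mul _ _ _).symm
  refine ⟨⟨u * w⁻¹, i, hβPhi'⟩, neg_nonneg.mpr huβ, ?_⟩
  intro β' hβ'Phi hβ'pos hdom
  obtain ⟨v, l, hβ'eq⟩ := hβ'Phi
  set δ : I → ℝ := ρ u⁻¹ β' with hδ
  have hδPhi : δ ∈ Phi ρ := ⟨u⁻¹ * v, l, by rw [hδ, hβ'eq, rho_mul]⟩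
  have hρuδ : ρ u δ = β' := by rw [hδ, rho_cancel_inv]
  have hρβ : ∀ x : W, ρ x β = - ρ (x * w⁻¹) (sroot i) := by
    intro x; rw [hβeq, map_neg, ← rho_mul]
  have hρβne : ∀ x : W, ρ x β ≠ 0 := by
    intro x h
    rw [hρβ x] at h
    exact root_ne_zero (x * w⁻¹) i (neg_eq_zero.mp h)
  have h6 : Hplus ρ δ ⊆ Hplus ρ (-β) := by
    intro x hx
    have hx1 : 0 ≤ ρ x δ := hx
    have hx2 : x * u⁻¹ ∈ Hplus ρ β' := by
      show 0 ≤ ρ (x * u⁻¹) β'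
      rw [rho_mul]
      exact hx1
    have hx3 : 0 ≤ ρ (x * u⁻¹) (- ρ u β) := hdom hx2
    show 0 ≤ ρ x (-β)
    have heq2 : ρ (x * u⁻¹) (ρ u β) = ρ x β := by rw [← rho_mul, inv_mul_cancel_right]
    rw [map_neg, heq2] at hx3
    rwa [map_neg]
  have h7 : Hplus ρ β ⊆ Hplus ρ (-δ) := by
    intro x hx
    have hx1 : 0 ≤ ρ x β := hx
    show 0 ≤ ρ x (-δ)
    rw [map_neg]
    have hδroot : ρ x δ = ρ (x * (u⁻¹ * v)) (sroot l) := by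
      rw [hδ, hβ'eq, ← rho_mul, ← rho_mul, mul_assoc]
    rcases root_dichotomy hgeom (x * (u⁻¹ * v)) l with hpos2 | hneg2
    · exfalso
      have hxδ : (0:I→ℝ) ≤ ρ x δ := by rw [hδroot]; exact hpos2
      have hx5 : 0 ≤ ρ x (-β) := h6 hxδ
      rw [map_neg] at hx5
      exact hρβne x (le_antisymm (neg_nonneg.mp hx5) hx1)
    · have hxδ : ρ x δ ≤ 0 := by rw [hδroot]; exact hneg2
      exact neg_nonneg.mpr hxδ
  have hnegδRL : -δ ∈ RL ρ L := ⟨phi_neg hgeom hδPhi, fun x hxL => h7 (hβRL.2 x hxL)⟩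
  have hnegδSepu : -δ ∈ Sep ρ L u :=
    ⟨hnegδRL, by rw [map_neg, hρuδ]; exact neg_nonpos.mpr hβ'pos⟩
  have hnegδSepw : -δ ∈ Sep ρ L w := by rw [← hSS]; exact hnegδSepu
  have hε : 0 ≤ ρ w δ := by
    have h9 := hnegδSepw.2
    rw [map_neg] at h9
    exact neg_nonpos.mp h9
  have hεPhi : ρ w δ ∈ Phi ρ := phi_action w hδPhi
  have h8 : Hplus ρ (ρ w δ) ⊆ Hplus ρ (sroot i) := by
    intro x hx
    have hx1 : 0 ≤ ρ x (ρ w δ) := hx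
    have hx2 : (0:I→ℝ) ≤ ρ (x * w) δ := by rw [rho_mul]; exact hx1
    have hx4 : 0 ≤ ρ (x * w) (-β) := h6 hx2
    show 0 ≤ ρ x (sroot i)
    have hcomp : ρ (x * w) (-β) = ρ x (sroot i) := by
      rw [map_neg, hρβ (x * w), neg_neg, mul_inv_cancel_right]
    rwa [hcomp] at hx4
  have hεeq : ρ w δ = sroot i := simple_small hgeom i hεPhi hε h8
  have hδeq : δ = - β := by
    have h10 : ρ w⁻¹ (ρ w δ) = ρ w⁻¹ (sroot i) := by rw [hεeq]
    rw [rho_inv_cancel] at h10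
    rw [h10, hβeq, neg_neg]
  rw [← hρuδ, hδeq, map_neg]
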